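/- arXiv:2006.10341 — 2 statements merged into one kernel-verified Lean document; each statement's English description precedes it below -/
import Mathlib

section
/- Let λ_k = 1/k! and Y_N = ∑_{k=1}^N ε_k/k! with ε_k ∈ {-1,1}. Then any two distinct points in the support of Y_N are at distance at least 2/N!, and 2/N! > 2 R_N where R_N = ∑_{k>N} 1/k!. -/
/-! Multiplied by `N! / 2`, the difference of two points of the support becomes the integer
`∑ k ≤ N, (ε k - ε' k) / 2 * (N! / k!)`, so distinct points are at least `2 / N!` apart.
Since `(N+1)! (N+2)^k ≤ (N+1+k)!`, the tail `R_N` is dominated by a geometric series with sum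
`(N+2) / ((N+1) (N+1)!)`, which is below `1 / N!` once `N ≥ 1`. -/

open Finset Nat

lemma exists_int_sum_div_factorial_eq (d : ℕ → ℤ) {s : Finset ℕ} {N : ℕ}
    (hs : ∀ k ∈ s, k ≤ N) : ∃ m : ℤ, ∑ k ∈ s, (d k : ℝ) / k ! = m / N ! := by
  refine ⟨∑ k ∈ s, d k * (N ! / k ! : ℕ), ?_⟩
  rw [eq_div_iff (by positivity), Int.cast_sum, sum_mul]
  refine sum_congr rfl fun k hk => ?_
  rw [Int.cast_mul, Int.cast_natCast,
    Nat.cast_div (factorial_dvd_factorial (hs k hk)) (by positivity)]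
  field_simp

lemma exists_sub_eq_two_mul_int_of_sign {a b : ℝ} (ha : a = 1 ∨ a = -1) (hb : b = 1 ∨ b = -1) :
    ∃ d : ℤ, a - b = 2 * d := by
  rcases ha with rfl | rfl <;> rcases hb with rfl | rfl
  exacts [⟨0, by norm_num⟩, ⟨1, by norm_num⟩, ⟨-1, by norm_num⟩, ⟨0, by norm_num⟩]

lemma exists_sum_sign_div_factorial_sub_eq (N : ℕ) {ε ε' : ℕ → ℝ}
    (hε : ∀ k, ε k = 1 ∨ ε k = -1) (hε' : ∀ k, ε' k = 1 ∨ ε' k = -1) :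
    ∃ m : ℤ, ∑ k ∈ Icc 1 N, ε k / (k ! : ℝ) - ∑ k ∈ Icc 1 N, ε' k / (k ! : ℝ) = m * (2 / N !) := by
  choose d hd using fun k => exists_sub_eq_two_mul_int_of_sign (hε k) (hε' k)
  obtain ⟨m, hm⟩ := exists_int_sum_div_factorial_eq d (s := Icc 1 N) fun k hk => (mem_Icc.mp hk).2
  refine ⟨m, ?_⟩
  calc ∑ k ∈ Icc 1 N, ε k / (k ! : ℝ) - ∑ k ∈ Icc 1 N, ε' k / (k ! : ℝ)
      = 2 * ∑ k ∈ Icc 1 N, (d k : ℝ) / k ! := by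
        rw [← sum_sub_distrib, mul_sum]
        exact sum_congr rfl fun k _ => by rw [← sub_div, hd, mul_div_assoc]
    _ = m * (2 / N !) := by rw [hm]; ring

lemma le_abs_of_eq_int_mul {a c : ℝ} {m : ℤ} (hc : 0 ≤ c) (ha : a = m * c) (h0 : a ≠ 0) :
    c ≤ |a| := by
  have hm : m ≠ 0 := by rintro rfl; simp [ha] at h0
  rw [ha, abs_mul, abs_of_nonneg hc]
  exact le_mul_of_one_le_left hc (by exact_mod_cast Int.one_le_abs hm)

lemma one_div_factorial_add_le (n k : ℕ) :
    1 / ((n + k)! : ℝ) ≤ 1 / n ! * (1 / (n + 1)) ^ k := by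
  calc 1 / ((n + k)! : ℝ) ≤ 1 / (n ! * (n + 1) ^ k) := by
        gcongr
        exact_mod_cast factorial_mul_pow_le_factorial
    _ = 1 / n ! * (1 / (n + 1)) ^ k := by rw [one_div_pow, one_div_mul_one_div]

lemma tsum_one_div_factorial_add_le {n : ℕ} (hn : 0 < n) :
    ∑' k, 1 / ((n + k)! : ℝ) ≤ (n + 1) / (n * n !) := by
  have hr : (1 / (n + 1) : ℝ) < 1 := by
    rw [div_lt_one (by positivity)]
    exact_mod_cast Nat.lt_add_of_pos_left hn
  have hgeom := (summable_geometric_of_lt_one (by positivity) hr).mul_left (1 / (n ! : ℝ))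
  calc ∑' k, 1 / ((n + k)! : ℝ)
      ≤ ∑' k, 1 / n ! * (1 / (n + 1) : ℝ) ^ k :=
        (hgeom.of_nonneg_of_le (fun k => by positivity) (one_div_factorial_add_le n)).tsum_le_tsum
          (one_div_factorial_add_le n) hgeom
    _ = (n + 1) / (n * n !) := by
        rw [tsum_mul_left, tsum_geometric_of_lt_one (by positivity) hr,
          one_sub_div (by positivity), add_sub_cancel_right]
        field_simp

lemma tsum_one_div_factorial_succ_add_lt {N : ℕ} (hN : 1 ≤ N) :
    ∑' k, 1 / ((N + 1 + k)! : ℝ) < 1 / N ! := by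
  calc ∑' k, 1 / ((N + 1 + k)! : ℝ)
      ≤ ((N + 1 : ℕ) + 1) / ((N + 1 : ℕ) * (N + 1)!) := tsum_one_div_factorial_add_le N.succ_pos
    _ < 1 / N ! := by
        rw [factorial_succ, div_lt_div_iff₀ (by positivity) (by positivity)]
        push_cast
        have hN' : (1 : ℝ) ≤ N := by exact_mod_cast hN
        have key : (N + 1 + 1 : ℝ) < (N + 1) * (N + 1) := by nlinarith
        nlinarith [mul_lt_mul_of_pos_right key (Nat.cast_pos.mpr (factorial_pos N) : (0 : ℝ) < N !)]

/-- For `λ_k = 1/k!` and `Y_N = ∑_{k=1}^N ε_k/k!`, any two distinct points of the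
support of `Y_N` are at distance at least `2/N!`, and `2/N! > 2 R_N` with
`R_N = ∑_{k>N} 1/k!`. -/
theorem support_separation_factorial (N : ℕ) (hN : 1 ≤ N) :
    (∀ x ∈ {y : ℝ | ∃ ε : ℕ → ℝ, (∀ k, ε k = 1 ∨ ε k = -1) ∧
        y = ∑ k ∈ Finset.Icc 1 N, ε k / (Nat.factorial k : ℝ)},
     ∀ x' ∈ {y : ℝ | ∃ ε : ℕ → ℝ, (∀ k, ε k = 1 ∨ ε k = -1) ∧
        y = ∑ k ∈ Finset.Icc 1 N, ε k / (Nat.factorial k : ℝ)},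
      x ≠ x' → 2 / (Nat.factorial N : ℝ) ≤ |x - x'|) ∧
    2 * (∑' k : ℕ, 1 / (Nat.factorial (N + 1 + k) : ℝ)) < 2 / (Nat.factorial N : ℝ) := by
  constructor
  · rintro _ ⟨ε, hε, rfl⟩ _ ⟨ε', hε', rfl⟩ hne
    obtain ⟨m, hm⟩ := exists_sum_sign_div_factorial_sub_eq N hε hε'
    exact le_abs_of_eq_int_mul (by positivity) hm (sub_ne_zero.mpr hne)
  · calc 2 * ∑' k, 1 / ((N + 1 + k)! : ℝ) < 2 * (1 / N !) :=
          mul_lt_mul_of_pos_left (tsum_one_div_factorial_succ_add_lt hN) two_pos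
      _ = 2 / N ! := mul_one_div 2 _
end

section
/- Let (ε_k) and (ε'_k) be two independent sequences of i.i.d. Rademacher variables, Y_N = ∑_{k=1}^N ε_k/k! and Y'_N = ∑_{k=1}^N ε'_k/k!. Then P(|Y_N - Y'_N| < 2 R_N) = 2^{-N}, where R_N = ∑_{k>N} 1/k!. -/
/-!
Off a null set every `ε_k - ε'_k` lies in `{-2, 0, 2}`. For such digits `d_k`, either
`d_1 = ⋯ = d_N = 0` or `|∑_{k ≤ N} d_k/k!| ≥ 2 R_N`, by induction on `N` using
`R_{N-1} = 1/N! + R_N` and `R_N ≤ 1/N!`: a first nonzero digit at `N` gives `2/N! ≥ 2 R_N`, and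
otherwise `d_N` moves the sum by at most `2/N! = 2 R_{N-1} - 2 R_N`. Hence the event is, up to a
null set, `{ε_k = ε'_k for 1 ≤ k ≤ N}`, an intersection of `N` independent events of
probability `1/2`.
-/

open MeasureTheory ProbabilityTheory Finset Filter Nat

noncomputable def factorialTail (N : ℕ) : ℝ := ∑' k : ℕ, 1 / ((N + 1 + k)! : ℝ)

lemma summable_one_div_factorial_add (N : ℕ) :
    Summable fun k : ℕ => 1 / ((N + 1 + k)! : ℝ) := by
  have h := (summable_nat_add_iff (N + 1)).2 (by simpa using Real.summable_pow_div_factorial 1)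
  simpa only [add_comm _ (N + 1), one_div] using h

lemma factorialTail_pos (N : ℕ) : 0 < factorialTail N :=
  (summable_one_div_factorial_add N).tsum_pos (fun _ => by positivity) 0 (by positivity)

lemma factorialTail_eq_add (N : ℕ) :
    factorialTail N = 1 / ((N + 1)! : ℝ) + factorialTail (N + 1) := by
  rw [factorialTail, (summable_one_div_factorial_add N).tsum_eq_zero_add, factorialTail]
  congr 2
  funext k
  rw [show N + 1 + (k + 1) = N + 1 + 1 + k by omega]

lemma factorialTail_le {N : ℕ} (hN : 1 ≤ N) : factorialTail N ≤ 1 / (N ! : ℝ) := by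
  have hterm (k : ℕ) : 1 / ((N + 1 + k)! : ℝ) ≤ 1 / N ! / 2 / 2 ^ k := by
    have hpow : 2 ^ (k + 1) ≤ (N + 1) ^ (k + 1) := Nat.pow_le_pow_left (by omega) _
    have hfact : N ! * 2 ^ (k + 1) ≤ (N + 1 + k)! := by
      rw [show N + 1 + k = N + (k + 1) by omega]
      exact (Nat.mul_le_mul_left _ hpow).trans factorial_mul_pow_le_factorial
    rw [div_div, div_div, ← pow_succ' (2 : ℝ) k]
    gcongr
    exact_mod_cast hfact
  calc factorialTail N ≤ ∑' k : ℕ, 1 / (N ! : ℝ) / 2 / 2 ^ k :=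
        (summable_one_div_factorial_add N).tsum_le_tsum hterm (summable_geometric_two' _)
    _ = 1 / N ! := tsum_geometric_two' _

lemma forall_eq_zero_or_mul_factorialTail_le {c : ℝ} (hc : 0 ≤ c) {a : ℕ → ℝ}
    (ha : ∀ k, a k = 0 ∨ |a k| = c) (N : ℕ) :
    (∀ k ∈ Icc 1 N, a k = 0) ∨ c * factorialTail N ≤ |∑ k ∈ Icc 1 N, a k / k !| := by
  induction N with
  | zero => simp
  | succ N ih =>
    have hlast : |a (N + 1) / (N + 1)!| ≤ c / (N + 1)! := by
      rw [abs_div, abs_of_pos (by positivity : (0 : ℝ) < (N + 1)!)]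
      gcongr
      rcases ha (N + 1) with h | h <;> simp [h, hc]
    have hc_tail : c * factorialTail (N + 1) ≤ c / (N + 1)! := by
      simpa only [mul_one_div] using mul_le_mul_of_nonneg_left (factorialTail_le (by omega)) hc
    rw [sum_Icc_succ_top (by omega)]
    rcases ih with hzero | hbound
    · rw [sum_eq_zero fun k hk => by rw [hzero k hk, zero_div], zero_add]
      rcases ha (N + 1) with hN | hN
      · left
        intro k hk
        rcases (mem_Icc.1 hk).2.eq_or_lt with rfl | hlt
        · exact hN
        · exact hzero k (mem_Icc.2 ⟨(mem_Icc.1 hk).1, by omega⟩)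
      · right
        rwa [abs_div, abs_of_pos (by positivity : (0 : ℝ) < (N + 1)!), hN]
    · right
      rw [factorialTail_eq_add, mul_add, mul_one_div] at hbound
      have htri := abs_sub (∑ k ∈ Icc 1 N, a k / k ! + a (N + 1) / (N + 1)!)
        (a (N + 1) / (N + 1)!)
      rw [add_sub_cancel_right] at htri
      linarith

lemma abs_sum_div_factorial_lt_iff {c : ℝ} (hc : 0 < c) {a : ℕ → ℝ}
    (ha : ∀ k, a k = 0 ∨ |a k| = c) (N : ℕ) :
    |∑ k ∈ Icc 1 N, a k / k !| < c * factorialTail N ↔ ∀ k ∈ Icc 1 N, a k = 0 := by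
  refine ⟨fun hlt => ?_, fun hzero => ?_⟩
  · exact (forall_eq_zero_or_mul_factorialTail_le hc.le ha N).resolve_right hlt.not_ge
  · rw [sum_eq_zero fun k hk => by rw [hzero k hk, zero_div], abs_zero]
    exact mul_pos hc (factorialTail_pos N)

lemma sub_eq_zero_or_abs_sub_eq_two {x y : ℝ} (hx : x = 1 ∨ x = -1) (hy : y = 1 ∨ y = -1) :
    x - y = 0 ∨ |x - y| = 2 := by
  rcases hx with rfl | rfl <;> rcases hy with rfl | rfl <;> norm_num

namespace ProbabilityTheory

variable {Ω : Type*} [MeasurableSpace Ω] {P : Measure Ω}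

def IsRademacher (P : Measure Ω) (X : Ω → ℝ) : Prop :=
  P {ω | X ω = 1} = 1 / 2 ∧ P {ω | X ω = -1} = 1 / 2

lemma IsRademacher.ae_eq_one_or_eq_neg_one [IsProbabilityMeasure P] {X : Ω → ℝ}
    (hX : IsRademacher P X) (hXm : Measurable X) : ∀ᵐ ω ∂P, X ω = 1 ∨ X ω = -1 := by
  have hdisj : Disjoint {ω | X ω = 1} {ω | X ω = -1} :=
    Set.disjoint_left.2 fun ω (h1 : X ω = 1) h2 => by norm_num [h1] at h2
  have hfull : P ({ω | X ω = 1} ∪ {ω | X ω = -1}) = 1 := by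
    rw [measure_union hdisj (hXm (measurableSet_singleton _)), hX.1, hX.2, one_div,
      ENNReal.inv_two_add_inv_two]
  exact ae_iff.2 ((prob_compl_eq_zero_iff ((hXm (measurableSet_singleton _)).union
    (hXm (measurableSet_singleton _)))).2 hfull)

lemma IsRademacher.measure_eq_eq_half [IsProbabilityMeasure P] {X Y : Ω → ℝ}
    (hX : IsRademacher P X) (hY : IsRademacher P Y) (hXm : Measurable X) (hYm : Measurable Y)
    (hXY : IndepFun X Y P) : P {ω | X ω = Y ω} = 1 / 2 := by
  have hsplit : {ω | X ω = Y ω} =ᵐ[P]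
      (({ω | X ω = 1} ∩ {ω | Y ω = 1}) ∪ ({ω | X ω = -1} ∩ {ω | Y ω = -1}) : Set Ω) := by
    refine eventuallyEq_set.2 ((hX.ae_eq_one_or_eq_neg_one hXm).mp
      ((hY.ae_eq_one_or_eq_neg_one hYm).mono fun ω hYω hXω => ?_))
    show X ω = Y ω ↔ X ω = 1 ∧ Y ω = 1 ∨ X ω = -1 ∧ Y ω = -1
    rcases hXω with h | h <;> rcases hYω with h' | h' <;> norm_num [h, h']
  have hdisj : Disjoint ({ω | X ω = 1} ∩ {ω | Y ω = 1}) ({ω | X ω = -1} ∩ {ω | Y ω = -1}) :=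
    Set.disjoint_left.2 fun ω (h1 : X ω = 1 ∧ _) (h2 : X ω = -1 ∧ _) => by norm_num [h1.1] at h2
  have hinter (x y : ℝ) :
      P ({ω | X ω = x} ∩ {ω | Y ω = y}) = P {ω | X ω = x} * P {ω | Y ω = y} :=
    hXY.measure_inter_preimage_eq_mul _ _ (measurableSet_singleton x) (measurableSet_singleton y)
  rw [measure_congr hsplit, measure_union hdisj ((hXm (measurableSet_singleton _)).inter
    (hYm (measurableSet_singleton _))), hinter, hinter, hX.1, hX.2, hY.1, hY.2, ← add_mul,
    one_div, ENNReal.inv_two_add_inv_two, one_mul]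

lemma iIndepFun.measure_biInter_inl_eq_inr {ι β : Type*} [MeasurableSpace β] [MeasurableEq β]
    {f : ι ⊕ ι → Ω → β} (hf : ∀ i, Measurable (f i)) (hindep : iIndepFun f P) (S : Finset ι) :
    P (⋂ k ∈ S, {ω | f (.inl k) ω = f (.inr k) ω}) =
      ∏ k ∈ S, P {ω | f (.inl k) ω = f (.inr k) ω} := by
  classical
  induction S using Finset.induction_on with
  | empty => simp [hindep.isProbabilityMeasure.measure_univ]
  | insert a S ha ih =>
    rw [set_biInter_insert, prod_insert ha, ← ih]
    have hdisj : Disjoint (({a} : Finset ι).disjSum {a}) (S.disjSum S) := by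
      simpa [Finset.disjoint_left, Sum.forall] using ha
    have hA : MeasurableSet {v : ↥(({a} : Finset ι).disjSum {a}) → β |
        v ⟨.inl a, inl_mem_disjSum.2 (mem_singleton_self a)⟩ =
          v ⟨.inr a, inr_mem_disjSum.2 (mem_singleton_self a)⟩} :=
      measurableSet_eq_fun (measurable_pi_apply _) (measurable_pi_apply _)
    have hB : MeasurableSet (⋂ k : S, {v : ↥(S.disjSum S) → β |
        v ⟨.inl k, inl_mem_disjSum.2 k.2⟩ = v ⟨.inr k, inr_mem_disjSum.2 k.2⟩}) :=
      .iInter fun _ => measurableSet_eq_fun (measurable_pi_apply _) (measurable_pi_apply _)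
    have := (hindep.indepFun_finset _ _ hdisj hf).measure_inter_preimage_eq_mul _ _ hA hB
    rwa [Set.preimage_iInter, Set.iInter_subtype] at this

end ProbabilityTheory

/-- For two independent sequences of i.i.d. Rademacher variables `ε, ε'` (given as one
independent family indexed by `ℕ ⊕ ℕ`), with `Y_N = ∑_{k=1}^N ε_k/k!` and
`Y'_N = ∑_{k=1}^N ε'_k/k!`, one has `P(|Y_N - Y'_N| < 2 R_N) = 2^{-N}`
where `R_N = ∑_{k>N} 1/k!`. -/
theorem rademacher_coincidence_probability
    {Ω : Type*} [MeasurableSpace Ω] (P : Measure Ω) [IsProbabilityMeasure P]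
    (f : ℕ ⊕ ℕ → Ω → ℝ) (hmeas : ∀ i, Measurable (f i))
    (hindep : iIndepFun f P)
    (hrad : ∀ i, P {ω | f i ω = 1} = 1 / 2 ∧ P {ω | f i ω = -1} = 1 / 2)
    (N : ℕ) :
    P {ω | |(∑ k ∈ Finset.Icc 1 N, f (Sum.inl k) ω / (Nat.factorial k : ℝ)) -
            ∑ k ∈ Finset.Icc 1 N, f (Sum.inr k) ω / (Nat.factorial k : ℝ)| <
          2 * ∑' k : ℕ, 1 / (Nat.factorial (N + 1 + k) : ℝ)} = (1 / 2) ^ N := by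
  have hsign : ∀ᵐ ω ∂P, ∀ i, f i ω = 1 ∨ f i ω = -1 :=
    ae_all_iff.2 fun i => IsRademacher.ae_eq_one_or_eq_neg_one (hrad i) (hmeas i)
  have hcoincide : {ω | |(∑ k ∈ Icc 1 N, f (.inl k) ω / (k ! : ℝ)) -
        ∑ k ∈ Icc 1 N, f (.inr k) ω / (k ! : ℝ)| < 2 * factorialTail N} =ᵐ[P]
      ⋂ k ∈ Icc 1 N, {ω | f (.inl k) ω = f (.inr k) ω} := by
    refine eventuallyEq_set.2 (hsign.mono fun ω hω => ?_)
    have hdigit (k : ℕ) := sub_eq_zero_or_abs_sub_eq_two (hω (.inl k)) (hω (.inr k))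
    simp only [Set.mem_ofPred_eq, Set.mem_iInter, ← sum_sub_distrib, ← sub_div]
    rw [abs_sum_div_factorial_lt_iff two_pos hdigit]
    simp only [sub_eq_zero]
  have hpair (k : ℕ) : P {ω | f (.inl k) ω = f (.inr k) ω} = 1 / 2 :=
    IsRademacher.measure_eq_eq_half (hrad _) (hrad _) (hmeas _) (hmeas _)
      (hindep.indepFun Sum.inl_ne_inr)
  rw [← factorialTail, measure_congr hcoincide, hindep.measure_biInter_inl_eq_inr hmeas,
    prod_congr rfl fun k _ => hpair k, prod_const, Nat.card_Icc, Nat.add_sub_cancel]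
end
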